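/- arXiv:2004.04790 — 2 statements merged into one kernel-verified Lean document; each statement's English description precedes it below -/
import Mathlib

section
/- Any Gauss sequence of length 8 on 4 symbols (each symbol appearing exactly twice) that is evenly-intersected (every symbol's two occurrences have an even number of other symbols strictly between them, cyclically) and has no two adjacent equal symbols (cyclically) must contain four consecutive distinct symbols (cyclically). -/
lemma three_aux (f : ZMod 8 → Fin 4)
    (hcount : ∀ s : Fin 4, {i : ZMod 8 | f i = s}.ncard = 2)
    {x y z : ZMod 8} (hxy : x ≠ y) (hxz : x ≠ z) (hyz : y ≠ z)
    (h1 : f x = f y) (h2 : f x = f z) : False := by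
  have hset : {i : ZMod 8 | f i = f x} =
      ↑(Finset.univ.filter (fun j => f j = f x)) := by ext a; simp
  have hc2 : (Finset.univ.filter (fun j => f j = f x)).card = 2 := by
    have h := hcount (f x)
    rwa [hset, Set.ncard_coe_finset] at h
  have hsub : ({x, y, z} : Finset (ZMod 8)) ⊆
      Finset.univ.filter (fun j => f j = f x) := by
    intro a ha
    simp only [Finset.mem_insert, Finset.mem_singleton] at ha
    rcases ha with rfl | rfl | rfl <;> simp [h1.symm, h2.symm]
  have hc3 : ({x, y, z} : Finset (ZMod 8)).card = 3 := by
    rw [Finset.card_insert_of_notMem (by simp [hxy, hxz]),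
        Finset.card_insert_of_notMem (by simp [hyz]), Finset.card_singleton]
  have := Finset.card_le_card hsub
  omega

lemma key_aux (f : ZMod 8 → Fin 4)
    (hcount : ∀ s : Fin 4, {i : ZMod 8 | f i = s}.ncard = 2)
    (heven : ∀ i j : ZMod 8, i ≠ j → f i = f j → Even ((j - i).val - 1))
    (hadj : ∀ i : ZMod 8, f i ≠ f (i + 1)) :
    ∀ i : ZMod 8, f (i + 3) = f i ∨ f (i + 5) = f i := by
  intro i
  have hset : {j : ZMod 8 | f j = f i} =
      ↑(Finset.univ.filter (fun j => f j = f i)) := by ext a; simp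
  have hc2 : (Finset.univ.filter (fun j => f j = f i)).card = 2 := by
    have h := hcount (f i)
    rwa [hset, Set.ncard_coe_finset] at h
  have h12 : 1 < (Finset.univ.filter (fun j => f j = f i)).card := by
    rw [hc2]; norm_num
  obtain ⟨j, hj, hji⟩ := Finset.exists_mem_ne h12 i
  simp only [Finset.mem_filter, Finset.mem_univ, true_and] at hj
  have hje : j = i + (j - i) := by ring
  have hd0 : j - i ≠ 0 := fun h => hji (by rw [hje, h, add_zero])
  have hd1 : j - i ≠ 1 := by
    intro h
    rw [hje, h] at hj
    exact hadj i hj.symm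
  have hd7 : j - i ≠ 7 := by
    intro h
    have h' : j = i + 7 := by rwa [sub_eq_iff_eq_add'] at h
    have hij : i = j + 1 := by
      rw [h', show (i + (7:ZMod 8)) + 1 = i + 8 from by ring,
        show (8:ZMod 8) = 0 from by decide, add_zero]
    rw [hij] at hj
    exact hadj j hj
  have heo := heven i j hji.symm hj.symm
  have hdec : ∀ d : ZMod 8, d ≠ 0 → d ≠ 1 → d ≠ 7 → Even (d.val - 1) →
      d = 3 ∨ d = 5 := by decide
  rcases hdec (j - i) hd0 hd1 hd7 heo with h | h
  · left; rw [← h, ← hje, hj]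
  · right; rw [← h, ← hje, hj]

/-- Any Gauss sequence of length 8 on 4 symbols (each symbol appearing
exactly twice), which is evenly-intersected (every symbol's two occurrences have an
even number of entries strictly between them, cyclically) and has no two cyclically
adjacent equal symbols, contains four cyclically consecutive pairwise distinct symbols. -/
theorem stmt_0 (f : ZMod 8 → Fin 4)
    (hcount : ∀ s : Fin 4, {i : ZMod 8 | f i = s}.ncard = 2)
    (heven : ∀ i j : ZMod 8, i ≠ j → f i = f j → Even ((j - i).val - 1))
    (hadj : ∀ i : ZMod 8, f i ≠ f (i + 1)) :
    ∃ i : ZMod 8,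
      f i ≠ f (i + 1) ∧ f i ≠ f (i + 2) ∧ f i ≠ f (i + 3) ∧
      f (i + 1) ≠ f (i + 2) ∧ f (i + 1) ≠ f (i + 3) ∧ f (i + 2) ≠ f (i + 3) := by
  have key := key_aux f hcount heven hadj
  have three : ∀ {x y z : ZMod 8}, x ≠ y → x ≠ z → y ≠ z →
      f x = f y → f x = f z → False := fun hxy hxz hyz h1 h2 =>
    three_aux f hcount hxy hxz hyz h1 h2
  have k0 := key 0; have k1 := key 1; have k2 := key 2; have k3 := key 3
  have k4 := key 4; have k6 := key 6
  simp only [show (0:ZMod 8)+3 = 3 from by decide, show (0:ZMod 8)+5 = 5 from by decide,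
    show (1:ZMod 8)+3 = 4 from by decide, show (1:ZMod 8)+5 = 6 from by decide,
    show (2:ZMod 8)+3 = 5 from by decide, show (2:ZMod 8)+5 = 7 from by decide,
    show (3:ZMod 8)+3 = 6 from by decide, show (3:ZMod 8)+5 = 0 from by decide,
    show (4:ZMod 8)+3 = 7 from by decide, show (4:ZMod 8)+5 = 1 from by decide,
    show (6:ZMod 8)+3 = 1 from by decide, show (6:ZMod 8)+5 = 3 from by decide]
    at k0 k1 k2 k3 k4 k6
  rcases k0 with h03 | h05
  · rcases k1 with h14 | h16
    · rcases k6 with h61 | h63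
      · exact (three (x := (1:ZMod 8)) (y := 4) (z := 6) (by decide) (by decide) (by decide)
          h14.symm h61).elim
      · exact (three (x := (3:ZMod 8)) (y := 0) (z := 6) (by decide) (by decide) (by decide)
          h03 h63).elim
    · rcases k2 with h25 | h27
      · -- witness i = 3
        refine ⟨3, ?_, ?_, ?_, ?_, ?_, ?_⟩ <;>
          simp only [show (3:ZMod 8)+1 = 4 from by decide, show (3:ZMod 8)+2 = 5 from by decide,
            show (3:ZMod 8)+3 = 6 from by decide,
            show ((3:ZMod 8)+1)+1 = 5 from by decide, show ((3:ZMod 8)+1)+2 = 6 from by decide,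
            show ((3:ZMod 8)+2)+1 = 6 from by decide]
        · intro h
          exact hadj 3 (by rw [show (3:ZMod 8)+1 = 4 from by decide]; exact h)
        · intro h
          exact three (x := (0:ZMod 8)) (y := 3) (z := 5) (by decide) (by decide) (by decide)
            h03.symm (h03.symm.trans h)
        · intro h
          exact three (x := (0:ZMod 8)) (y := 3) (z := 6) (by decide) (by decide) (by decide)
            h03.symm (h03.symm.trans h)
        · intro h
          exact hadj 4 (by rw [show (4:ZMod 8)+1 = 5 from by decide]; exact h)
        · intro h
          exact three (x := (1:ZMod 8)) (y := 6) (z := 4) (by decide) (by decide) (by decide)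
            h16.symm (h16.symm.trans h.symm)
        · intro h
          exact three (x := (2:ZMod 8)) (y := 5) (z := 6) (by decide) (by decide) (by decide)
            h25.symm (h25.symm.trans h)
      · rcases k4 with h47 | h41
        · exact (three (x := (7:ZMod 8)) (y := 2) (z := 4) (by decide) (by decide) (by decide)
            h27 h47).elim
        · exact (three (x := (1:ZMod 8)) (y := 6) (z := 4) (by decide) (by decide) (by decide)
            h16.symm h41).elim
  · rcases k1 with h14 | h16
    · rcases k2 with h25 | h27
      · exact (three (x := (0:ZMod 8)) (y := 5) (z := 2) (by decide) (by decide) (by decide)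
          h05.symm (h05.symm.trans h25)).elim
      · rcases k3 with h36 | h30
        · -- witness i = 0
          refine ⟨0, ?_, ?_, ?_, ?_, ?_, ?_⟩ <;>
            simp only [show (0:ZMod 8)+1 = 1 from by decide, show (0:ZMod 8)+2 = 2 from by decide,
              show (0:ZMod 8)+3 = 3 from by decide,
              show ((0:ZMod 8)+1)+1 = 2 from by decide, show ((0:ZMod 8)+1)+2 = 3 from by decide,
              show ((0:ZMod 8)+2)+1 = 3 from by decide]
          · intro h
            exact hadj 0 (by rw [show (0:ZMod 8)+1 = 1 from by decide]; exact h)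
          · intro h
            exact three (x := (0:ZMod 8)) (y := 5) (z := 2) (by decide) (by decide) (by decide)
              h05.symm h
          · intro h
            exact three (x := (0:ZMod 8)) (y := 5) (z := 3) (by decide) (by decide) (by decide)
              h05.symm h
          · intro h
            exact three (x := (1:ZMod 8)) (y := 4) (z := 2) (by decide) (by decide) (by decide)
              h14.symm h
          · intro h
            exact three (x := (1:ZMod 8)) (y := 4) (z := 3) (by decide) (by decide) (by decide)
              h14.symm h
          · intro h
            exact hadj 2 (by rw [show (2:ZMod 8)+1 = 3 from by decide]; exact h)
        · exact (three (x := (0:ZMod 8)) (y := 5) (z := 3) (by decide) (by decide) (by decide)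
            h05.symm h30).elim
    · rcases k3 with h36 | h30
      · exact (three (x := (6:ZMod 8)) (y := 1) (z := 3) (by decide) (by decide) (by decide)
          h16 h36).elim
      · exact (three (x := (0:ZMod 8)) (y := 5) (z := 3) (by decide) (by decide) (by decide)
          h05.symm h30).elim
end

section
/- A perfect matching of 2m points on a circle in which every pair consists of antipodal points (points at cyclic distance m, with m even so that antipodality is well-defined as a fixed-point-free involution) has genus ⌊m/2⌋ when glued; in particular, for m = 2 (a square with both pairs of opposite edges identified) the genus is 1. -/
/-- The antipodal matching on 2m points: point i is matched with point i + m. -/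
def antipodal (m : ℕ) : Fin (2 * m) → Fin (2 * m) := fun i =>
  ⟨(i.val + m) % (2 * m), by have := i.isLt; exact Nat.mod_lt _ (by omega)⟩

/-- The genus of the closed orientable surface obtained by gluing a polygon with
`m` boundary edges according to the matching `M`: the vertex classes `V` are the
orbits of (rotation ∘ matching), and 2g = m/2 + 1 - V. -/
def matchingGenus (m : ℕ) (M : Fin m → Fin m) (hM : Function.Involutive M) : ℕ :=
  let τ : Equiv.Perm (Fin m) := (Function.Involutive.toPerm M hM).trans (finRotate m)
  let V : ℕ := (Finset.univ.filter fun x : Fin m => τ x = x).card + τ.cycleType.card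
  (m / 2 + 1 - V) / 2

lemma finRotate_val {n : ℕ} (hn : 0 < n) (x : Fin n) :
    ((finRotate n) x).val = (x.val + 1) % n := by
  obtain ⟨k, rfl⟩ : ∃ k, n = k + 1 := ⟨n - 1, by omega⟩
  rw [finRotate_succ_apply, Fin.val_add, Fin.val_one', Nat.add_mod_mod]

lemma finRotate_pow_val {n : ℕ} (hn : 0 < n) (k : ℕ) (x : Fin n) :
    (((finRotate n) ^ k) x).val = (x.val + k) % n := by
  induction k with
  | zero => simp [Nat.mod_eq_of_lt x.isLt]
  | succ k ih =>
    rw [pow_succ', Equiv.Perm.mul_apply, finRotate_val hn, ih, Nat.mod_add_mod,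
      ← Nat.add_assoc]

lemma tau_eq (m : ℕ) (hm : 0 < m) (hinv : Function.Involutive (antipodal m)) :
    ((Function.Involutive.toPerm (antipodal m) hinv).trans (finRotate (2 * m)) :
      Equiv.Perm (Fin (2 * m))) = (finRotate (2 * m)) ^ (m + 1) := by
  have h2m : 0 < 2 * m := by omega
  ext x
  show (((finRotate (2 * m)) (antipodal m x)) : Fin (2 * m)).val = _
  rw [finRotate_val h2m]
  show ((x.val + m) % (2 * m) + 1) % (2 * m) = (((finRotate (2 * m)) ^ (m + 1)) x).val
  rw [finRotate_pow_val h2m, Nat.mod_add_mod, ← Nat.add_assoc]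

/-- Gluing a disk along the antipodal matching of 2m boundary points
(m even, so antipodality is a fixed-point-free involution) produces a surface of
genus ⌊m/2⌋; in particular for m = 2 (a square with opposite edges identified) the
genus is 1. -/
theorem stmt_16 (m : ℕ) (hm : 0 < m) (hme : Even m)
    (hinv : Function.Involutive (antipodal m)) :
    matchingGenus (2 * m) (antipodal m) hinv = m / 2 ∧
    (m = 2 → matchingGenus (2 * m) (antipodal m) hinv = 1) := by
  have hm2 : 2 ≤ m := by rcases hme with ⟨r, hr⟩; omega
  have hτ := tau_eq m hm hinv
  set τ : Equiv.Perm (Fin (2 * m)) :=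
    (Function.Involutive.toPerm (antipodal m) hinv).trans (finRotate (2 * m)) with hτdef
  have hcop : Nat.Coprime (m + 1) (2 * m) := by
    have h2 : Nat.Coprime (m + 1) 2 := by
      refine Odd.coprime_two_right ?_
      rcases hme with ⟨r, hr⟩
      exact ⟨r, by omega⟩
    have hmc : Nat.Coprime (m + 1) m := by
      simp [Nat.coprime_comm]
    exact Nat.Coprime.mul_right h2 hmc
  have hord : orderOf (finRotate (2 * m)) = 2 * m := by
    rw [(isCycle_finRotate_of_le (by omega)).orderOf,
      support_finRotate_of_le (by omega)]
    simp
  have hcyc : τ.IsCycle := by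
    rw [hτ, (isCycle_finRotate_of_le (by omega : 2 ≤ 2 * m)).pow_iff, hord]
    exact hcop
  have hnofix : ∀ x : Fin (2 * m), τ x ≠ x := by
    intro x hx
    rw [hτ] at hx
    have hval := congrArg Fin.val hx
    rw [finRotate_pow_val (by omega)] at hval
    have hxlt := x.isLt
    rcases Nat.lt_or_ge (x.val + (m + 1)) (2 * m) with h | h
    · rw [Nat.mod_eq_of_lt h] at hval; omega
    · rw [Nat.mod_eq_sub_mod h, Nat.mod_eq_of_lt (by omega)] at hval; omega
  have hfilter : (Finset.univ.filter fun x : Fin (2 * m) => τ x = x) = ∅ := by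
    ext x; simp [hnofix x]
  have hct : τ.cycleType.card = 1 := by
    rw [hcyc.cycleType]; rfl
  have hgen : matchingGenus (2 * m) (antipodal m) hinv = m / 2 := by
    show ((2 * m) / 2 + 1 -
      ((Finset.univ.filter fun x : Fin (2 * m) => τ x = x).card + τ.cycleType.card)) / 2 = m / 2
    rw [hfilter, hct]
    simp only [Finset.card_empty]
    omega
  exact ⟨hgen, fun h2 => by rw [hgen, h2]⟩
end
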